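/- arXiv:2011.08888 — 5 statements merged into one kernel-verified Lean document; each statement's English description precedes it below -/
import Mathlib

section
/- For natural numbers N, k, n with 1 ≤ k ≤ N and 1 ≤ n ≤ N, one has ∑_{j=1}^{n-1} (k falling factorial j)/(N falling factorial j) = k/(N-k+1) - ((N-n+1)/(N-k+1)) · (k falling factorial n)/(N falling factorial n), where the empty sum (n=1) is 0 and x falling factorial j := x(x-1)⋯(x-j+1). -/
/-!
Write `a j = x^{\underline j} / y^{\underline j}`. Since `(y - j) a (j + 1) = (x - j) a j`, the
quantity `(y - x + 1) a j` equals `g j - g (j + 1)` with `g j = (y - j + 1) a j`, so the sum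
telescopes; for `x = k`, `y = N` the denominators are nonzero as long as `j ≤ N`.
-/

open Polynomial Finset

section DescPochhammerRatio

variable {K : Type*} [Field K] (x y : K)

theorem descPochhammer_ratio_telescope (j : ℕ) (hy : (descPochhammer K (j + 1)).eval y ≠ 0) :
    (y - x + 1) * ((descPochhammer K j).eval x / (descPochhammer K j).eval y)
      = (y - j + 1) * ((descPochhammer K j).eval x / (descPochhammer K j).eval y)
        - (y - (j + 1 : ℕ) + 1)
          * ((descPochhammer K (j + 1)).eval x / (descPochhammer K (j + 1)).eval y) := by
  simp only [descPochhammer_succ_eval] at hy ⊢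
  have hyj : (descPochhammer K j).eval y ≠ 0 := left_ne_zero_of_mul hy
  have hyj' : y - j ≠ 0 := right_ne_zero_of_mul hy
  field_simp
  push_cast
  ring

theorem mul_sum_range_descPochhammer_ratio (n : ℕ) (hy : (descPochhammer K n).eval y ≠ 0) :
    (y - x + 1) * ∑ j ∈ range n, (descPochhammer K j).eval x / (descPochhammer K j).eval y
      = y + 1 - (y - n + 1) * ((descPochhammer K n).eval x / (descPochhammer K n).eval y) := by
  induction n with
  | zero => simp
  | succ n ih =>
    have hyn : (descPochhammer K n).eval y ≠ 0 := by
      rw [descPochhammer_succ_eval] at hy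
      exact left_ne_zero_of_mul hy
    rw [sum_range_succ, mul_add, ih hyn, descPochhammer_ratio_telescope x y n hy]
    ring

end DescPochhammerRatio

theorem falling_factorial_sum_identity_general (N k n : ℕ)
    (hkN : k ≤ N) (hn1 : 1 ≤ n) (hnN : n ≤ N) :
    ∑ j ∈ Finset.Icc 1 (n - 1),
        (Nat.descFactorial k j : ℝ) / (Nat.descFactorial N j)
      = (k : ℝ) / ((N : ℝ) - k + 1)
        - (((N : ℝ) - n + 1) / ((N : ℝ) - k + 1))
            * ((Nat.descFactorial k n : ℝ) / (Nat.descFactorial N n)) := by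
  obtain ⟨m, rfl⟩ : ∃ m, n = m + 1 := ⟨n - 1, by omega⟩
  have hden : (N : ℝ) - k + 1 ≠ 0 := by
    have : (k : ℝ) ≤ N := by exact_mod_cast hkN
    linarith
  have hNn : (descPochhammer ℝ (m + 1)).eval (N : ℝ) ≠ 0 := by
    rw [descPochhammer_eval_eq_descFactorial, Nat.cast_ne_zero, Ne,
      Nat.descFactorial_eq_zero_iff_lt]
    omega
  have htel := mul_sum_range_descPochhammer_ratio (k : ℝ) (N : ℝ) (m + 1) hNn
  have hsplit : ∑ j ∈ range (m + 1), (k.descFactorial j : ℝ) / N.descFactorial j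
      = 1 + ∑ j ∈ Icc 1 m, (k.descFactorial j : ℝ) / N.descFactorial j := by
    rw [range_eq_Ico, sum_eq_sum_Ico_succ_bot (Nat.add_one_pos m), Ico_add_one_right_eq_Icc]
    simp
  simp only [descPochhammer_eval_eq_descFactorial, hsplit] at htel
  rw [Nat.add_sub_cancel]
  field_simp
  push_cast at htel ⊢
  linear_combination htel

/-- Auxiliary lemma (Lemma 6.1 in the paper): for `1 ≤ k ≤ N` and `1 ≤ n ≤ N`,
`∑_{j=1}^{n-1} k^{\underline j}/N^{\underline j}
  = k/(N-k+1) - ((N-n+1)/(N-k+1)) · k^{\underline n}/N^{\underline n}`. -/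
theorem falling_factorial_sum_identity (N k n : ℕ)
    (hk1 : 1 ≤ k) (hkN : k ≤ N) (hn1 : 1 ≤ n) (hnN : n ≤ N) :
    ∑ j ∈ Finset.Icc 1 (n - 1),
        (Nat.descFactorial k j : ℝ) / (Nat.descFactorial N j)
      = (k : ℝ) / ((N : ℝ) - k + 1)
        - (((N : ℝ) - n + 1) / ((N : ℝ) - k + 1))
            * ((Nat.descFactorial k n : ℝ) / (Nat.descFactorial N n)) :=
  falling_factorial_sum_identity_general N k n hkN hn1 hnN
end

section
/- Let Y be the continuous-time Markov chain on {0,…,N} with generator 𝒜 f(k) = k((N-k)/N)[f(k+1)-f(k)] + k((N-k)/N + ∑_{m≥1} s_m(1-(k/N)^m))[f(k-1)-f(k)] (no mutation, u = 0), and let R be the continuous-time Markov chain on {0,…,N} with generator ℬ g(n) = n((n-1)/N)[g(n-1)-g(n)] + ∑_{m≥1} s_m (n/N^m) ∑_{j=1}^{m} (N-n)^{\underline{j}} C^n_{mj} [g(n+j)-g(n)], where C^n_{mj} = ∑_{ℓ=j}^m binom(m,ℓ) S(ℓ,j) n^{m-ℓ}. Then for the function H(k,n) = k^{\underline{n}}/N^{\underline{n}},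 one has 𝒜 H(·,n)(k) = ℬ H(k,·)(n) for all k, n ∈ {0,…,N}. -/
/-- Stirling numbers of the second kind. -/
def stirling2 : ℕ → ℕ → ℕ
  | 0, 0 => 1
  | 0, _ + 1 => 0
  | _ + 1, 0 => 0
  | n + 1, j + 1 => (j + 1) * stirling2 n (j + 1) + stirling2 n j

/-- `C^n_{mj} = ∑_{ℓ=j}^m binom(m,ℓ) S(ℓ,j) n^{m-ℓ}`. -/
def Cnmj (n m j : ℕ) : ℕ :=
  ∑ ℓ ∈ Finset.Icc j m, Nat.choose m ℓ * stirling2 ℓ j * n ^ (m - ℓ)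

/-- The hypergeometric duality function `H(k,n) = k^{\underline n}/N^{\underline n}`. -/
noncomputable def Hdual (N k n : ℕ) : ℝ :=
  (Nat.descFactorial k n : ℝ) / (Nat.descFactorial N n)

/-!
Both generators act on `H(k,n) = k^{\underline n}/N^{\underline n}` through falling-factorial
identities. The resampling part of `𝒜` is `k(N-k)/N` times a second difference in `k`, and
`x Δ² x^{\underline{n+1}} = (n+1) n x^{\underline n}` turns it into the coalescence part of `ℬ`.
The selection part of `𝒜` matches the branching part of `ℬ` separately for every `m`: the death
step gives `k (H(k-1,n) - H(k,n)) = -n H(k,n)`, while `(N-n)^{\underline j} H(k,n+j) =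
H(k,n) (k-n)^{\underline j}` and `(x+n)^m = ∑_j C^n_{mj} x^{\underline j}` (binomial theorem and
`x^ℓ = ∑_j S(ℓ,j) x^{\underline j}`) sum the branching rates to `n H(k,n) (k^m - N^m) / N^m`.
-/

open Finset Polynomial

theorem stirling2_eq_stirlingSecond : ∀ n j, stirling2 n j = Nat.stirlingSecond n j
  | 0, 0 | 0, _ + 1 | _ + 1, 0 => rfl
  | n + 1, j + 1 => by
    rw [stirling2, Nat.stirlingSecond_succ_succ, stirling2_eq_stirlingSecond n (j + 1),
      stirling2_eq_stirlingSecond n j]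

section FallingFactorial

variable {R : Type*} [CommRing R]

theorem X_pow_eq_sum_stirlingSecond_mul_descPochhammer : ∀ ℓ : ℕ,
    (X : R[X]) ^ ℓ = ∑ j ∈ range (ℓ + 1), (Nat.stirlingSecond ℓ j : R[X]) * descPochhammer R j
  | 0 => by simp
  | ℓ + 1 => by
    have hmul_X : ∀ j, (Nat.stirlingSecond ℓ j : R[X]) * descPochhammer R j * X
        = (Nat.stirlingSecond ℓ j : R[X]) * descPochhammer R (j + 1)
          + (j * Nat.stirlingSecond ℓ j : R[X]) * descPochhammer R j := fun j => by
      rw [descPochhammer_succ_right]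
      ring
    have hshift : ∑ j ∈ range (ℓ + 1), (j * Nat.stirlingSecond ℓ j : R[X]) * descPochhammer R j
        = ∑ j ∈ range (ℓ + 1), ((j + 1) * Nat.stirlingSecond ℓ (j + 1) : R[X])
            * descPochhammer R (j + 1) := by
      rw [sum_range_succ', sum_range_succ _ ℓ, Nat.stirlingSecond_eq_zero_of_lt ℓ.lt_succ_self]
      simp
    rw [pow_succ, X_pow_eq_sum_stirlingSecond_mul_descPochhammer ℓ, sum_mul,
      sum_congr rfl fun j _ => hmul_X j, sum_add_distrib, hshift, ← sum_add_distrib,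
      sum_range_succ' _ (ℓ + 1), Nat.stirlingSecond_succ_zero, Nat.cast_zero, zero_mul, add_zero]
    refine sum_congr rfl fun j _ => ?_
    rw [Nat.stirlingSecond_succ_succ]
    push_cast
    ring

theorem pow_eq_sum_stirlingSecond_mul_descPochhammer_eval (x : R) (ℓ : ℕ) :
    x ^ ℓ = ∑ j ∈ range (ℓ + 1), (Nat.stirlingSecond ℓ j : R) * (descPochhammer R j).eval x := by
  simpa [eval_finsetSum] using
    congr_arg (eval x) (X_pow_eq_sum_stirlingSecond_mul_descPochhammer (R := R) ℓ)

theorem Cnmj_zero_right (n m : ℕ) : Cnmj n m 0 = n ^ m := by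
  rw [Cnmj, sum_eq_single 0]
  · simp [stirling2_eq_stirlingSecond]
  · rintro (_ | ℓ) _ hℓ
    · exact (hℓ rfl).elim
    · simp [stirling2_eq_stirlingSecond]
  · simp

theorem add_pow_eq_sum_Cnmj_mul_descPochhammer_eval (x : R) (n m : ℕ) :
    (x + n) ^ m = ∑ j ∈ range (m + 1), (Cnmj n m j : R) * (descPochhammer R j).eval x := by
  simp only [add_pow, pow_eq_sum_stirlingSecond_mul_descPochhammer_eval x, sum_mul, Cnmj,
    Nat.cast_sum, Nat.cast_mul, Nat.cast_pow, stirling2_eq_stirlingSecond]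
  rw [sum_comm' (t' := range (m + 1)) (s' := fun j => Icc j m)]
  · refine sum_congr rfl fun j _ => sum_congr rfl fun ℓ _ => ?_
    ring
  · intro ℓ j
    simp only [mem_range, mem_Icc]
    omega

theorem sum_Icc_Cnmj_mul_descPochhammer_eval (x : R) (n m : ℕ) :
    ∑ j ∈ Icc 1 m, (Cnmj n m j : R) * (descPochhammer R j).eval x = (x + n) ^ m - n ^ m := by
  rw [add_pow_eq_sum_Cnmj_mul_descPochhammer_eval, range_eq_Ico,
    sum_eq_sum_Ico_succ_bot m.succ_pos, Cnmj_zero_right]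
  simp [Finset.Ico_add_one_right_eq_Icc]

theorem descPochhammer_succ_eval_left (x : R) (n : ℕ) :
    (descPochhammer R (n + 1)).eval x = x * (descPochhammer R n).eval (x - 1) := by
  simp [descPochhammer_succ_left]

theorem mul_second_difference_descPochhammer_succ_eval (x : R) (n : ℕ) :
    x * ((descPochhammer R (n + 1)).eval (x + 1) - 2 * (descPochhammer R (n + 1)).eval x
        + (descPochhammer R (n + 1)).eval (x - 1))
      = (n + 1) * n * (descPochhammer R n).eval x := by
  have h₁ := descPochhammer_succ_eval_left (x + 1) n
  have h₂ := descPochhammer_succ_eval n x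
  have h₃ := descPochhammer_succ_eval_left x (n + 1)
  have h₄ := descPochhammer_succ_eval (n + 1) x
  rw [add_sub_cancel_right] at h₁
  push_cast at h₄
  linear_combination x * h₁ - (x + n + 1) * h₂ - h₃ + h₄

end FallingFactorial

theorem Hdual_eq_descPochhammer_eval (N k n : ℕ) :
    Hdual N k n = (descPochhammer ℝ n).eval (k : ℝ) / N.descFactorial n := by
  rw [Hdual, descPochhammer_eval_eq_descFactorial]

-- The factor `k` makes the truncated `0 - 1 = 0` at `k = 0` harmless.
theorem natCast_mul_Hdual_pred (N k n : ℕ) :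
    (k : ℝ) * Hdual N (k - 1) n
      = k * (descPochhammer ℝ n).eval ((k : ℝ) - 1) / N.descFactorial n := by
  rcases k with _ | k
  · simp
  · rw [Nat.add_sub_cancel, Hdual_eq_descPochhammer_eval]
    push_cast
    rw [add_sub_cancel_right, mul_div_assoc]

theorem natCast_mul_Hdual_pred_sub (N k n : ℕ) :
    (k : ℝ) * (Hdual N (k - 1) n - Hdual N k n) = -(n * Hdual N k n) := by
  rw [mul_sub, natCast_mul_Hdual_pred, ← descPochhammer_succ_eval_left, descPochhammer_succ_eval,
    Hdual_eq_descPochhammer_eval]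
  ring

theorem Hdual_sub_Hdual_succ {N n : ℕ} (hn : n < N) (k : ℕ) :
    Hdual N k n - Hdual N k (n + 1)
      = (N - k) * (descPochhammer ℝ n).eval (k : ℝ) / N.descFactorial (n + 1) := by
  have hD : (N.descFactorial n : ℝ) ≠ 0 :=
    Nat.cast_ne_zero.2 (Nat.descFactorial_eq_zero_iff_lt.not.2 (not_lt.2 hn.le))
  have hNn : (N : ℝ) - n ≠ 0 := sub_ne_zero.2 (Nat.cast_injective.ne hn.ne')
  simp only [Hdual_eq_descPochhammer_eval, ← descPochhammer_eval_eq_descFactorial ℝ N,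
    descPochhammer_succ_eval] at hD ⊢
  field_simp
  ring

theorem resampling_Hdual_eq_coalescence {N n : ℕ} (hn : n ≤ N) (k : ℕ) :
    (k : ℝ) * (((N : ℝ) - k) / N) * (Hdual N (k + 1) n - Hdual N k n)
      + (k : ℝ) * (((N : ℝ) - k) / N) * (Hdual N (k - 1) n - Hdual N k n)
    = (n : ℝ) * (((n : ℝ) - 1) / N) * (Hdual N k (n - 1) - Hdual N k n) := by
  rcases n with _ | n
  · simp [Hdual]
  have hsecond : (k : ℝ) * (Hdual N (k + 1) (n + 1) - 2 * Hdual N k (n + 1)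
        + Hdual N (k - 1) (n + 1))
      = (n + 1) * n * (descPochhammer ℝ n).eval (k : ℝ) / N.descFactorial (n + 1) := by
    rw [mul_add, natCast_mul_Hdual_pred, Hdual_eq_descPochhammer_eval,
      Hdual_eq_descPochhammer_eval, ← mul_second_difference_descPochhammer_succ_eval]
    push_cast
    ring
  rw [Nat.add_sub_cancel, Hdual_sub_Hdual_succ hn]
  push_cast
  linear_combination ((N - k) / N : ℝ) * hsecond

theorem descFactorial_mul_Hdual_add {N k : ℕ} (hk : k ≤ N) (n j : ℕ) :
    ((N - n).descFactorial j : ℝ) * Hdual N k (n + j) = Hdual N k n * (k - n).descFactorial j := by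
  have hN := Nat.descFactorial_mul_descFactorial (n := N) (Nat.le_add_right n j)
  have hk' := Nat.descFactorial_mul_descFactorial (n := k) (Nat.le_add_right n j)
  rw [Nat.add_sub_cancel_left] at hN hk'
  rw [Hdual, Hdual, ← hN, ← hk']
  rcases eq_or_ne ((N - n).descFactorial j) 0 with h | h
  · have : (k - n).descFactorial j = 0 := by
      rw [Nat.descFactorial_eq_zero_iff_lt] at h ⊢
      omega
    simp [h, this]
  · push_cast
    rw [← mul_div_assoc, mul_div_mul_left _ _ (Nat.cast_ne_zero.2 h)]
    ring

theorem selection_Hdual_eq_branching {N k : ℕ} (hN : N ≠ 0) (hk : k ≤ N) (n m : ℕ) :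
    (1 - ((k : ℝ) / N) ^ m) * (k * (Hdual N (k - 1) n - Hdual N k n))
      = (n / (N : ℝ) ^ m) * ∑ j ∈ Icc 1 m,
          ((N - n).descFactorial j : ℝ) * Cnmj n m j * (Hdual N k (n + j) - Hdual N k n) := by
  have hsum : ∑ j ∈ Icc 1 m,
        ((N - n).descFactorial j : ℝ) * Cnmj n m j * (Hdual N k (n + j) - Hdual N k n)
      = Hdual N k n * (∑ j ∈ Icc 1 m, (Cnmj n m j : ℝ) * (k - n).descFactorial j
          - ∑ j ∈ Icc 1 m, (Cnmj n m j : ℝ) * (N - n).descFactorial j) := by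
    rw [mul_sub, mul_sum, mul_sum, ← sum_sub_distrib]
    refine sum_congr rfl fun j _ => ?_
    linear_combination (Cnmj n m j : ℝ) * descFactorial_mul_Hdual_add hk n j
  rw [natCast_mul_Hdual_pred_sub, hsum]
  rcases lt_or_ge k n with hkn | hnk
  · simp [Hdual, Nat.descFactorial_eq_zero_iff_lt.2 hkn]
  · simp only [← descPochhammer_eval_eq_descFactorial ℝ, sum_Icc_Cnmj_mul_descPochhammer_eval]
    have hNm : (N : ℝ) ^ m ≠ 0 := pow_ne_zero m (Nat.cast_ne_zero.2 hN)
    push_cast [hnk, hnk.trans hk]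
    rw [div_pow]
    field_simp
    ring

theorem factorial_moment_duality_generator_identity_general (N : ℕ) (hN : 1 ≤ N)
    (s : ℕ → ℝ)
    (k n : ℕ) (hk : k ≤ N) (hn : n ≤ N) :
    (k : ℝ) * (((N : ℝ) - k) / N) * (Hdual N (k + 1) n - Hdual N k n)
      + (k : ℝ) * (((N : ℝ) - k) / N
          + ∑' m : ℕ, s m * (1 - ((k : ℝ) / N) ^ m))
          * (Hdual N (k - 1) n - Hdual N k n)
    = (n : ℝ) * (((n : ℝ) - 1) / N) * (Hdual N k (n - 1) - Hdual N k n)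
      + ∑' m : ℕ, s m * ((n : ℝ) / (N : ℝ) ^ m)
          * ∑ j ∈ Finset.Icc 1 m,
              (Nat.descFactorial (N - n) j : ℝ) * (Cnmj n m j : ℝ)
                * (Hdual N k (n + j) - Hdual N k n) := by
  have hselection : ∑' m : ℕ, s m * ((n : ℝ) / (N : ℝ) ^ m)
        * ∑ j ∈ Icc 1 m, ((N - n).descFactorial j : ℝ) * Cnmj n m j
          * (Hdual N k (n + j) - Hdual N k n)
      = (∑' m : ℕ, s m * (1 - ((k : ℝ) / N) ^ m)) * (k * (Hdual N (k - 1) n - Hdual N k n)) := by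
    rw [← tsum_mul_right]
    refine tsum_congr fun m => ?_
    rw [mul_assoc, ← selection_Hdual_eq_branching (by omega) hk]
    ring
  rw [hselection, ← resampling_Hdual_eq_coalescence hn]
  ring

/-- Generator identity behind the factorial moment duality between the FTW Moran model
(no mutation) and the line-counting process of the killed ASG:
`𝒜_Y H(·,n)(k) = 𝒜_R H(k,·)(n)` for all `k, n ∈ {0,…,N}`. -/
theorem factorial_moment_duality_generator_identity (N : ℕ) (hN : 1 ≤ N)
    (s : ℕ → ℝ) (hs : ∀ m, 0 ≤ s m)
    (hsum : Summable (fun m : ℕ => (m : ℝ) * s m))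
    (k n : ℕ) (hk : k ≤ N) (hn : n ≤ N) :
    (k : ℝ) * (((N : ℝ) - k) / N) * (Hdual N (k + 1) n - Hdual N k n)
      + (k : ℝ) * (((N : ℝ) - k) / N
          + ∑' m : ℕ, s m * (1 - ((k : ℝ) / N) ^ m))
          * (Hdual N (k - 1) n - Hdual N k n)
    = (n : ℝ) * (((n : ℝ) - 1) / N) * (Hdual N k (n - 1) - Hdual N k n)
      + ∑' m : ℕ, s m * ((n : ℝ) / (N : ℝ) ^ m)
          * ∑ j ∈ Finset.Icc 1 m,
              (Nat.descFactorial (N - n) j : ℝ) * (Cnmj n m j : ℝ)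
                * (Hdual N k (n + j) - Hdual N k n) :=
  factorial_moment_duality_generator_identity_general N hN s k n hk hn
end

section
/- Fix N ≥ 1, u > 0, ν_0, ν_1 ≥ 0. For the mutation generator parts 𝒜^{ν_1}_{Ỹ} f(k) = (N-k)(k/(k+1)) u ν_1 [f(k+1)-f(k)] + ((N-k)/(k+1)) u ν_1 [f(0)-f(k)] acting on f:{0,…,N}→ℝ, and 𝒜^{ν_1}_{L} g(n) = u ν_1 (n-1)[g(n-1)-g(n)] acting on g:{1,…,N}→ℝ, and for the duality function H(k,n) = k^{\underline{n}}/N^{\underline{n}}, one has 𝒜^{ν_1}_{Ỹ} H(·,n)(k) = 𝒜^{ν_1}_{L} H(k,·)(n) for all k ∈ {0,…,N} and n ∈ {1,…,N}. -/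
/-- Holds without `m ≤ k`: for `k < m` both sides vanish. -/
theorem Nat.cast_descFactorial_succ {R : Type*} [CommRing R] (k m : ℕ) :
    (k.descFactorial (m + 1) : R) = ((k : R) - m) * k.descFactorial m := by
  rcases le_or_gt m k with hmk | hkm
  · rw [Nat.descFactorial_succ, Nat.cast_mul, Nat.cast_sub hmk]
  · rw [Nat.descFactorial_of_lt hkm, Nat.descFactorial_of_lt (by omega), Nat.cast_zero,
      mul_zero]

theorem Hdual_zero_left (N n : ℕ) (hn : n ≠ 0) : Hdual N 0 n = 0 := by
  obtain ⟨m, rfl⟩ := Nat.exists_eq_succ_of_ne_zero hn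
  simp [Hdual]

theorem Hdual_succ_right (N k m : ℕ) :
    Hdual N k (m + 1) = ((k : ℝ) - m) / ((N : ℝ) - m) * Hdual N k m := by
  rw [Hdual, Hdual, Nat.cast_descFactorial_succ, Nat.cast_descFactorial_succ, mul_div_mul_comm]

theorem Hdual_succ_succ (N k m : ℕ) :
    Hdual N (k + 1) (m + 1) = ((k : ℝ) + 1) / ((N : ℝ) - m) * Hdual N k m := by
  rw [Hdual, Hdual, Nat.succ_descFactorial_succ, Nat.cast_descFactorial_succ, Nat.cast_mul,
    Nat.cast_succ, mul_div_mul_comm]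

theorem deleterious_mutation_generator_identity_general (N : ℕ)
    (u ν₁ : ℝ)
    (k n : ℕ) (hn1 : 1 ≤ n) (hnN : n ≤ N) :
    ((N : ℝ) - k) * ((k : ℝ) / ((k : ℝ) + 1)) * u * ν₁ * (Hdual N (k + 1) n - Hdual N k n)
      + (((N : ℝ) - k) / ((k : ℝ) + 1)) * u * ν₁ * (Hdual N 0 n - Hdual N k n)
    = u * ν₁ * ((n : ℝ) - 1) * (Hdual N k (n - 1) - Hdual N k n) := by
  obtain ⟨m, rfl⟩ := Nat.exists_eq_add_of_le' hn1
  have hNm : (N : ℝ) - m ≠ 0 := sub_ne_zero.mpr (by exact_mod_cast (by omega : N ≠ m))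
  have hk : (k : ℝ) + 1 ≠ 0 := by positivity
  rw [Hdual_zero_left N _ m.succ_ne_zero, Hdual_succ_succ, Hdual_succ_right, Nat.add_sub_cancel,
    Nat.cast_succ]
  field_simp
  ring

/-- Deleterious-mutation part of the generator identity in the factorial moment duality
between `Ỹ` and the line-counting process `L` of the pruned lookdown ASG:
`𝒜^{ν₁}_{Ỹ} H(·,n)(k) = 𝒜^{ν₁}_{L} H(k,·)(n)`. -/
theorem deleterious_mutation_generator_identity (N : ℕ) (hN : 1 ≤ N)
    (u ν₀ ν₁ : ℝ) (hu : 0 < u) (hν₀ : 0 ≤ ν₀) (hν₁ : 0 ≤ ν₁)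
    (k n : ℕ) (hk : k ≤ N) (hn1 : 1 ≤ n) (hnN : n ≤ N) :
    ((N : ℝ) - k) * ((k : ℝ) / ((k : ℝ) + 1)) * u * ν₁ * (Hdual N (k + 1) n - Hdual N k n)
      + (((N : ℝ) - k) / ((k : ℝ) + 1)) * u * ν₁ * (Hdual N 0 n - Hdual N k n)
    = u * ν₁ * ((n : ℝ) - 1) * (Hdual N k (n - 1) - Hdual N k n) :=
  deleterious_mutation_generator_identity_general N u ν₁ k n hn1 hnN
end

section
/- Fix m ≥ 1, σ > 0, 0 < α < 1. For k ∈ {1,…,N-1} let q_k := (1 + (σ/N^α) · (1-(k/N)^m)/(1-(k/N)))^{-1}. Then the fixation probability of a single fit mutant, 1 - h_∞(N-1) = 1/∑_{ℓ=1}^{N} ∏_{j=ℓ}^{N-1} q_j, satisfies 1 - h_∞(N-1) = (mσ/N^α)(1 + o(1)) as N → ∞. -/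
/-!
Write `s = σ / N^α` and `q_j = (1 + s G(j/N))⁻¹`, where `G(x) = 1 + x + ⋯ + x^(m-1)` lies
in `[1, m]` on `[0, 1)`. Reading the products from the top,
`∑_ℓ ∏_{ℓ ≤ j < N} q_j = ∑_{k < N} ∏_{i < k} q_{N-1-i}`.

Since every `q_j ≥ (1 + s m)⁻¹`, the sum dominates a geometric sum, which gives
`m s ∑ ≥ 1 - (1 + N s m)⁻¹ → 1` because `N s → ∞`. Conversely, fix `a < 1`: the top
`K = ⌊(1 - a) N⌋` factors are at most `(1 + s m a^(m-1))⁻¹` and all factors are at most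
`(1 + s)⁻¹`, so `m s ∑ ≤ (1 + s m a^(m-1)) / a^(m-1) + m (1 + s) / (1 + K s m a^(m-1))`.
This tends to `a^(-(m-1))` because `s → 0` and `K s → ∞`, and `a` may be taken arbitrarily
close to `1`.
-/

open Filter Finset Topology

/-- `1 / fixationSum q N` is the probability that a birth–death chain on `{0, …, N}` with
birth/death ratios `q` absorbs at `N` when started from `N - 1`. -/
noncomputable def fixationSum (q : ℕ → ℝ) (N : ℕ) : ℝ :=
  ∑ ℓ ∈ Icc 1 N, ∏ j ∈ Icc ℓ (N - 1), q j

theorem fixationSum_eq_sum_range_prod (q : ℕ → ℝ) (N : ℕ) :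
    fixationSum q N = ∑ k ∈ range N, ∏ i ∈ range k, q (N - 1 - i) := by
  refine sum_nbij' (fun ℓ => N - ℓ) (fun k => N - k) ?_ ?_ ?_ ?_ fun ℓ hℓ => ?_
  any_goals intro ℓ hℓ; simp only [mem_Icc, mem_range] at hℓ ⊢; omega
  refine prod_nbij' (fun j => N - 1 - j) (fun i => N - 1 - i) ?_ ?_ ?_ ?_ fun j hj => ?_
  all_goals simp only [mem_Icc, mem_range] at hℓ ⊢
  any_goals intro j hj; omega
  rw [mem_Icc] at hj
  congr 1
  omega

theorem geom_sum_le_sum_prod_range {a : ℕ → ℝ} {r : ℝ} {n : ℕ} (hr : 0 ≤ r)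
    (ha : ∀ i < n, r ≤ a i) :
    ∑ k ∈ range n, r ^ k ≤ ∑ k ∈ range n, ∏ i ∈ range k, a i := by
  refine sum_le_sum fun k hk => ?_
  simpa using prod_le_prod (s := range k) (fun _ _ => hr) fun i hi =>
    ha i ((mem_range.1 hi).trans (mem_range.1 hk))

theorem sum_prod_range_le_geom_sum {a : ℕ → ℝ} {r : ℝ} {n : ℕ} (ha0 : ∀ i < n, 0 ≤ a i)
    (ha : ∀ i < n, a i ≤ r) :
    ∑ k ∈ range n, ∏ i ∈ range k, a i ≤ ∑ k ∈ range n, r ^ k := by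
  refine sum_le_sum fun k hk => ?_
  simpa using prod_le_prod (s := range k)
    (fun i hi => ha0 i ((mem_range.1 hi).trans (mem_range.1 hk)))
    fun i hi => ha i ((mem_range.1 hi).trans (mem_range.1 hk))

theorem sum_prod_range_le {ρ ρ₁ : ℝ} (hρ : 0 ≤ ρ) (hρ₁ : 0 ≤ ρ₁) (hρ₁1 : ρ₁ < 1) (K : ℕ) :
    ∀ {a : ℕ → ℝ} {n : ℕ}, (∀ i < n, 0 ≤ a i) → (∀ i < n, a i ≤ ρ₁) →
      (∀ i < n, i < K → a i ≤ ρ) →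
      ∑ k ∈ range n, ∏ i ∈ range k, a i ≤ ∑ k ∈ range K, ρ ^ k + ρ ^ K / (1 - ρ₁) := by
  induction K with
  | zero =>
    intro a n ha0 ha1 _
    calc ∑ k ∈ range n, ∏ i ∈ range k, a i ≤ ∑ k ∈ range n, ρ₁ ^ k :=
          sum_prod_range_le_geom_sum ha0 ha1
      _ ≤ ρ₁ ^ 0 / (1 - ρ₁) := by
          rw [range_eq_Ico]; exact geom_sum_Ico_le_of_lt_one hρ₁ hρ₁1
      _ = _ := by simp
  | succ K ih =>
    intro a n ha0 ha1 haK
    cases n with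
    | zero => simp only [range_zero, sum_empty]; positivity
    | succ n =>
      have htail := ih (a := fun i => a (i + 1)) (n := n) (fun i hi => ha0 _ (by omega))
        (fun i hi => ha1 _ (by omega)) (fun i hi hiK => haK _ (by omega) (by omega))
      have hS : 0 ≤ ∑ k ∈ range n, ∏ i ∈ range k, a (i + 1) :=
        sum_nonneg fun k hk => prod_nonneg fun i hi =>
          ha0 _ (by simp only [mem_range] at hi hk; omega)
      calc ∑ k ∈ range (n + 1), ∏ i ∈ range k, a i
          = (∑ k ∈ range n, ∏ i ∈ range k, a (i + 1)) * a 0 + 1 := by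
            simp only [sum_range_succ', prod_range_succ', sum_mul, range_zero, prod_empty]
        _ ≤ (∑ k ∈ range K, ρ ^ k + ρ ^ K / (1 - ρ₁)) * ρ + 1 := by
            gcongr ?_ + 1
            exact mul_le_mul htail (haK 0 (by omega) (by omega)) (ha0 0 (by omega)) (hS.trans htail)
        _ = _ := by rw [geom_sum_succ]; ring

theorem one_sub_pow_div_one_sub {x : ℝ} (hx : x ≠ 1) (m : ℕ) :
    (1 - x ^ m) / (1 - x) = ∑ i ∈ range m, x ^ i := by
  rw [geom_sum_eq hx, ← neg_div_neg_eq, neg_sub, neg_sub]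

theorem geom_sum_le_of_le_one {x : ℝ} (hx0 : 0 ≤ x) (hx1 : x ≤ 1) (m : ℕ) :
    ∑ i ∈ range m, x ^ i ≤ m := by
  simpa using sum_le_sum fun i (_ : i ∈ range m) => pow_le_one₀ hx0 hx1

theorem one_le_geom_sum {x : ℝ} (hx : 0 ≤ x) {m : ℕ} (hm : 1 ≤ m) :
    1 ≤ ∑ i ∈ range m, x ^ i := by
  simpa using single_le_sum (fun i _ => pow_nonneg hx i) (mem_range.2 hm)

theorem mul_pow_pred_le_geom_sum {a x : ℝ} (ha : 0 ≤ a) (hax : a ≤ x) (hx1 : x ≤ 1) (m : ℕ) :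
    m * a ^ (m - 1) ≤ ∑ i ∈ range m, x ^ i := by
  have hterm : ∀ i ∈ range m, a ^ (m - 1) ≤ x ^ i := fun i hi =>
    (pow_le_pow_left₀ ha hax _).trans
      (pow_le_pow_of_le_one (ha.trans hax) hx1 (by rw [mem_range] at hi; omega))
  simpa using sum_le_sum hterm

/-- The ratio `q_j = λ_j / μ_j` of the type-1 frequency process at selection strength `s`. -/
noncomputable def haldaneRatio (m : ℕ) (s : ℝ) (N j : ℕ) : ℝ :=
  (1 + s * ((1 - ((j : ℝ) / N) ^ m) / (1 - (j : ℝ) / N)))⁻¹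

section haldaneRatio

variable {m : ℕ} {s : ℝ} {N j : ℕ}

theorem natCast_div_mem_Ico (hj : j < N) : (j : ℝ) / N ∈ Set.Ico 0 1 :=
  ⟨by positivity, (div_lt_one (by exact_mod_cast j.zero_le.trans_lt hj)).2 (by exact_mod_cast hj)⟩

theorem haldaneRatio_eq (hj : j < N) :
    haldaneRatio m s N j = (1 + s * ∑ i ∈ range m, ((j : ℝ) / N) ^ i)⁻¹ := by
  rw [haldaneRatio, one_sub_pow_div_one_sub (natCast_div_mem_Ico hj).2.ne]

theorem haldaneRatio_nonneg (hs : 0 ≤ s) (hj : j < N) : 0 ≤ haldaneRatio m s N j := by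
  have := (natCast_div_mem_Ico hj).1
  rw [haldaneRatio_eq hj]
  positivity

theorem inv_one_add_mul_le_haldaneRatio (hs : 0 ≤ s) (hj : j < N) :
    (1 + s * m)⁻¹ ≤ haldaneRatio m s N j := by
  obtain ⟨hx0, hx1⟩ := natCast_div_mem_Ico hj
  rw [haldaneRatio_eq hj]
  gcongr
  exact geom_sum_le_of_le_one hx0 hx1.le m

theorem haldaneRatio_le_of_le_div {a : ℝ} (hs : 0 ≤ s) (hj : j < N) (ha : 0 ≤ a)
    (haj : a ≤ (j : ℝ) / N) :
    haldaneRatio m s N j ≤ (1 + s * (m * a ^ (m - 1)))⁻¹ := by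
  have hx1 := (natCast_div_mem_Ico hj).2
  rw [haldaneRatio_eq hj]
  gcongr
  exact mul_pow_pred_le_geom_sum ha haj hx1.le m

theorem haldaneRatio_le_inv_one_add (hm : 1 ≤ m) (hs : 0 ≤ s) (hj : j < N) :
    haldaneRatio m s N j ≤ (1 + s)⁻¹ := by
  rw [haldaneRatio_eq hj]
  gcongr
  exact le_mul_of_one_le_right hs (one_le_geom_sum (natCast_div_mem_Ico hj).1 hm)

end haldaneRatio

theorem one_sub_inv_le_fixationSum_mul {m N : ℕ} {s : ℝ} (hs : 0 ≤ s) :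
    1 - (1 + N * (s * m))⁻¹ ≤ fixationSum (haldaneRatio m s N) N * (m * s) := by
  set r := (1 + s * m)⁻¹
  have hr0 : 0 ≤ r := by positivity
  have hgeom : ∑ k ∈ range N, r ^ k ≤ fixationSum (haldaneRatio m s N) N := by
    rw [fixationSum_eq_sum_range_prod]
    exact geom_sum_le_sum_prod_range hr0 fun i hi =>
      inv_one_add_mul_le_haldaneRatio hs (by omega)
  have hbernoulli : r ^ N ≤ (1 + N * (s * m))⁻¹ := by
    rw [inv_pow]
    exact inv_anti₀ (by positivity) (one_add_mul_le_pow (by nlinarith [sq_nonneg s]) N)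
  have hr1 : r ≤ 1 := inv_le_one_of_one_le₀ (by nlinarith)
  have hr : 1 - r ≤ s * m := by
    have : 1 - r = s * m * r := by
      linear_combination -(mul_inv_cancel₀ (by positivity : 1 + s * m ≠ 0))
    rw [this]
    exact mul_le_of_le_one_right (by positivity) hr1
  calc 1 - (1 + N * (s * m))⁻¹ ≤ 1 - r ^ N := by linarith
    _ = (∑ k ∈ range N, r ^ k) * (1 - r) := (geom_sum_mul_neg r N).symm
    _ ≤ fixationSum (haldaneRatio m s N) N * (m * s) := by
      rw [mul_comm (m : ℝ)]
      exact mul_le_mul hgeom hr (by linarith) (hgeom.trans' (by positivity))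

theorem fixationSum_mul_le {m N K : ℕ} {s a : ℝ} (hm : 1 ≤ m) (hs : 0 < s) (ha : 0 < a)
    (hK : (K : ℝ) ≤ (1 - a) * N) :
    fixationSum (haldaneRatio m s N) N * (m * s) ≤
      (1 + s * (m * a ^ (m - 1))) / a ^ (m - 1) +
        m * (1 + s) / (1 + K * (s * (m * a ^ (m - 1)))) := by
  set c := m * a ^ (m - 1)
  have hc : 0 < c := by positivity
  set ρ := (1 + s * c)⁻¹
  set ρ₁ := (1 + s)⁻¹
  have hρ : ρ < 1 := inv_lt_one_of_one_lt₀ (by nlinarith)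
  have hρ₁ : ρ₁ < 1 := inv_lt_one_of_one_lt₀ (by linarith)
  have hsum : fixationSum (haldaneRatio m s N) N ≤ ∑ k ∈ range K, ρ ^ k + ρ ^ K / (1 - ρ₁) := by
    rw [fixationSum_eq_sum_range_prod]
    refine sum_prod_range_le (by positivity) (by positivity) hρ₁ K
      (fun i hi => haldaneRatio_nonneg hs.le (by omega))
      (fun i hi => haldaneRatio_le_inv_one_add hm hs.le (by omega)) fun i hi hiK => ?_
    refine haldaneRatio_le_of_le_div hs.le (by omega) ha.le ?_
    have hNpos : (0 : ℝ) < N := by exact_mod_cast (show 0 < N by omega)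
    rw [le_div_iff₀ hNpos]
    have : (N : ℝ) ≤ (N - 1 - i : ℕ) + K := by exact_mod_cast (by omega)
    linarith
  have hgeom : ∑ k ∈ range K, ρ ^ k ≤ (1 - ρ)⁻¹ := by
    have := geom_sum_Ico_le_of_lt_one (m := 0) (n := K) (by positivity) hρ
    rwa [← range_eq_Ico, pow_zero, one_div] at this
  have hbernoulli : ρ ^ K ≤ (1 + K * (s * c))⁻¹ := by
    rw [inv_pow]
    exact inv_anti₀ (by positivity) (one_add_mul_le_pow (by nlinarith) K)
  have hρ₁_pos : 0 < 1 - ρ₁ := by linarith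
  calc fixationSum (haldaneRatio m s N) N * (m * s)
      ≤ ((1 - ρ)⁻¹ + (1 + K * (s * c))⁻¹ / (1 - ρ₁)) * (m * s) := by
        gcongr
        exact hsum.trans (add_le_add hgeom (div_le_div_of_nonneg_right hbernoulli hρ₁_pos.le))
    _ = _ := by
        have hρ_sub : 1 - ρ = s * c / (1 + s * c) := by simp only [ρ]; field_simp; ring
        have hρ₁_sub : 1 - ρ₁ = s / (1 + s) := by simp only [ρ₁]; field_simp; ring
        rw [hρ_sub, hρ₁_sub]
        field_simp
        ring

theorem tendsto_fixationSum_mul {m : ℕ} (hm : 1 ≤ m) {s : ℕ → ℝ}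
    (hs : Tendsto s atTop (𝓝 0)) (hNs : Tendsto (fun N : ℕ => N * s N) atTop atTop) :
    Tendsto (fun N => fixationSum (haldaneRatio m (s N) N) N * (m * s N)) atTop (𝓝 1) := by
  have hpos : ∀ᶠ N in atTop, 0 < s N :=
    (hNs.eventually_gt_atTop 0).mono fun N h => pos_of_mul_pos_right h N.cast_nonneg
  rw [tendsto_order]
  refine ⟨fun b hb => ?_, fun b hb => ?_⟩
  · have hlow : Tendsto (fun N : ℕ => 1 - (1 + N * (s N * m))⁻¹) atTop (𝓝 1) := by
      have : Tendsto (fun N : ℕ => 1 + N * (s N * m)) atTop atTop := by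
        simpa only [mul_assoc] using
          tendsto_atTop_add_const_left _ 1 (hNs.atTop_mul_const (by positivity))
      simpa using tendsto_const_nhds.sub this.inv_tendsto_atTop
    filter_upwards [hlow.eventually (lt_mem_nhds hb), hpos] with N hN hsN
    exact hN.trans_le (one_sub_inv_le_fixationSum_mul hsN.le)
  · have hcont : Tendsto (fun a : ℝ => (a ^ (m - 1))⁻¹) (𝓝 1) (𝓝 1) := by
      simpa using ((continuous_pow (m - 1)).tendsto (1 : ℝ)).inv₀ (by simp)
    obtain ⟨a, hab, ha0, ha1⟩ : ∃ a : ℝ, (a ^ (m - 1))⁻¹ < b ∧ 0 < a ∧ a < 1 :=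
      ((hcont.mono_left (nhdsWithin_le_nhds (s := Set.Iio 1))).eventually (gt_mem_nhds hb)).and
        ((eventually_gt_nhds zero_lt_one).filter_mono nhdsWithin_le_nhds |>.and
          eventually_mem_nhdsWithin) |>.exists
    set c := m * a ^ (m - 1)
    have hc : 0 < c := by positivity
    have hKs : Tendsto (fun N : ℕ => (⌊(1 - a) * N⌋₊ : ℝ) * s N) atTop atTop := by
      have hlin : Tendsto (fun N : ℕ => (1 - a) * (N * s N) + -s N) atTop atTop :=
        (hNs.const_mul_atTop (sub_pos.2 ha1)).atTop_add (by simpa using hs.neg)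
      refine tendsto_atTop_mono' atTop ?_ hlin
      filter_upwards [hpos] with N hsN
      nlinarith [Nat.lt_floor_add_one ((1 - a) * N)]
    have hU : Tendsto (fun N : ℕ => (1 + s N * c) / a ^ (m - 1) +
        m * (1 + s N) / (1 + ⌊(1 - a) * N⌋₊ * (s N * c))) atTop (𝓝 (a ^ (m - 1))⁻¹) := by
      have hden : Tendsto (fun N : ℕ => 1 + ⌊(1 - a) * N⌋₊ * (s N * c)) atTop atTop := by
        simpa only [mul_assoc] using tendsto_atTop_add_const_left _ 1 (hKs.atTop_mul_const hc)
      simpa using (((hs.mul_const c).const_add 1).div_const (a ^ (m - 1))).add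
        (((hs.const_add 1).const_mul (m : ℝ)).div_atTop hden)
    filter_upwards [hU.eventually (gt_mem_nhds hab), hpos] with N hN hsN
    exact (fixationSum_mul_le hm hsN ha0 (Nat.floor_le (by nlinarith))).trans_lt hN

/-- Haldane's formula in the moderate selection regime: with
`q_k = (1 + (σ/N^α)(1-(k/N)^m)/(1-k/N))⁻¹`, the fixation probability of a single fit
mutant, `1 - h_∞(N-1) = 1/∑_{ℓ=1}^N ∏_{j=ℓ}^{N-1} q_j`, satisfies
`1 - h_∞(N-1) = (mσ/N^α)(1+o(1))` as `N → ∞`. -/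
theorem haldane_moderate_selection (m : ℕ) (hm : 1 ≤ m) (σ α : ℝ)
    (hσ : 0 < σ) (hα0 : 0 < α) (hα1 : α < 1) :
    Tendsto
      (fun N : ℕ =>
        (1 / ∑ ℓ ∈ Finset.Icc 1 N, ∏ j ∈ Finset.Icc ℓ (N - 1),
            (1 + (σ / (N : ℝ) ^ α)
                * ((1 - ((j : ℝ) / N) ^ m) / (1 - (j : ℝ) / N)))⁻¹)
          * ((N : ℝ) ^ α / ((m : ℝ) * σ)))
      atTop (nhds 1) := by
  have hs : Tendsto (fun N : ℕ => σ / (N : ℝ) ^ α) atTop (𝓝 0) :=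
    tendsto_const_nhds.div_atTop ((tendsto_rpow_atTop hα0).comp tendsto_natCast_atTop_atTop)
  have hNs : Tendsto (fun N : ℕ => N * (σ / (N : ℝ) ^ α)) atTop atTop := by
    refine (((tendsto_rpow_atTop (sub_pos.2 hα1)).comp
      tendsto_natCast_atTop_atTop).const_mul_atTop hσ).congr' ?_
    filter_upwards [eventually_gt_atTop 0] with N hN
    rw [Function.comp_apply, Real.rpow_sub (by positivity), Real.rpow_one]
    ring
  have := (tendsto_fixationSum_mul hm hs hNs).inv₀ one_ne_zero
  rw [inv_one] at this
  refine this.congr fun N => ?_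
  change _ = 1 / fixationSum (haldaneRatio m (σ / (N : ℝ) ^ α) N) N * _
  rw [one_div, mul_inv, mul_inv, inv_div]
  ring
end

section
/- Let X be a continuous-time birth-death process on {0,…,N} with birth rates λ_x (x < N) and death rates μ_x (x > 0), λ_N = μ_0 = 0, and let X^S be the birth-death process on {0,…,N+1} with death rates μ*_x = λ_{x-1} for 1 ≤ x ≤ N+1 and birth rates λ*_x = μ_x for 0 ≤ x ≤ N. Then for the duality function H(x, x*) = 1_{x ≥ x*}, the generators satisfy 𝒜_X H(·, x*)(x) = 𝒜_{X^S} H(x, ·)(x*) for all x ∈ {0,…,N}, x* ∈ {0,…,N+1}; consequently P(X_t ≥ x* | X_0 = x) = P(x ≥ X^S_t | X^S_0 = x*) for all t ≥ 0. -/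
open Matrix

/-- Generator of a birth-death chain on `{0,…,N}` with birth rates `birth x` and
death rates `death x` (as a `(N+1)×(N+1)` rate matrix, row = current state). -/
noncomputable def bdGenerator (N : ℕ) (birth death : ℕ → ℝ) :
    Matrix (Fin (N + 1)) (Fin (N + 1)) ℝ :=
  Matrix.of fun x y =>
    if y.val = x.val + 1 then birth x.val
    else if x.val = y.val + 1 then death x.val
    else if x = y then -(birth x.val + death x.val)
    else 0

/-
Siegmund duality is a generator identity. For `f = H(·, x*)` with `H(x, x*) = 1_{x ≥ x*}`, the
generator of `X` picks up only the two jumps that cross the threshold `x*`, which gives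
`λ_x 1_{x* = x+1} - μ_x 1_{x* = x}`; the generator of `X^S` applied to `H(x, ·)` at `x*` gives
the same expression once its rates are `λ*_x = μ_x`, `μ*_{x+1} = λ_x`. In matrix form this is
`Q H = H QSᵀ`, so `Q^k H = H (QSᵀ)^k` for all `k`, and summing the exponential series yields
`exp(tQ) H = H exp(tQS)ᵀ`.
-/

open Finset

-- `f` lives on `ℕ`: the truncated `x - 1` at `x = 0` and the value `f (M + 1)` outside the
-- chain are both multiplied by a vanishing rate.
lemma sum_bdGenerator_mul {M : ℕ} {b d : ℕ → ℝ} (hbM : b M = 0) (hd0 : d 0 = 0) (f : ℕ → ℝ)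
    (x : Fin (M + 1)) :
    ∑ y, bdGenerator M b d x y * f y = b x * (f (x + 1) - f x) + d x * (f (x - 1) - f x) := by
  have hrow : ∀ y : Fin (M + 1), bdGenerator M b d x y * f y =
      ((if (y : ℕ) = x + 1 then b x * f y else 0) + (if (y : ℕ) + 1 = x then d x * f y else 0))
        - (if (y : ℕ) = x then (b x + d x) * f y else 0) := by
    intro y
    simp only [bdGenerator, of_apply, Fin.ext_iff]
    split_ifs <;> first | omega | ring
  simp only [hrow, sum_sub_distrib, sum_add_distrib]
  rw [Fin.sum_univ_eq_sum_range (fun y => if y = x + 1 then b x * f y else 0),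
    Fin.sum_univ_eq_sum_range (fun y => if y + 1 = x then d x * f y else 0),
    Fin.sum_univ_eq_sum_range (fun y => if y = x then (b x + d x) * f y else 0),
    sum_ite_eq', sum_ite_eq']
  obtain ⟨x, hx⟩ := x
  have hdown : (∑ i ∈ range (M + 1), if i + 1 = x then d x * f i else 0) = d x * f (x - 1) := by
    cases x with
    | zero => simp [hd0]
    | succ k => simp [show k < M + 1 by omega]
  have hup : (if x + 1 ∈ range (M + 1) then b x * f (x + 1) else 0) = b x * f (x + 1) := by
    split_ifs with h
    · rfl
    · rw [show x = M by simp at h; omega, hbM, zero_mul]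
  dsimp only [Fin.val_mk]
  rw [hup, hdown, if_pos (mem_range.2 hx)]
  ring

def siegmundKernel (m n : ℕ) : Matrix (Fin m) (Fin n) ℝ :=
  of fun x xs => if (xs : ℕ) ≤ x then 1 else 0

noncomputable def siegmundDual (N : ℕ) (lam mu : ℕ → ℝ) : Matrix (Fin (N + 2)) (Fin (N + 2)) ℝ :=
  bdGenerator (N + 1) (fun x => if x ≤ N then mu x else 0)
    (fun x => if x = 0 then 0 else lam (x - 1))

lemma bdGenerator_mul_siegmundKernel_apply {N : ℕ} {lam mu : ℕ → ℝ} (hlamN : lam N = 0)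
    (hmu0 : mu 0 = 0) (x : Fin (N + 1)) (xs : Fin (N + 2)) :
    (bdGenerator N lam mu * siegmundKernel (N + 1) (N + 2)) x xs =
      if (xs : ℕ) = x + 1 then lam x else if (xs : ℕ) = x then -mu x else 0 := by
  rw [mul_apply]
  refine (sum_bdGenerator_mul hlamN hmu0 (fun y => if (xs : ℕ) ≤ y then 1 else 0) x).trans ?_
  have hmu : (x : ℕ) ≤ x - 1 → mu x = 0 := fun h => by rw [show (x : ℕ) = 0 by omega, hmu0]
  split_ifs <;> first | omega | simp_all

lemma siegmundDual_mul_siegmundKernel_transpose_apply {N : ℕ} {lam mu : ℕ → ℝ}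
    (x : Fin (N + 1)) (xs : Fin (N + 2)) :
    (siegmundDual N lam mu * (siegmundKernel (N + 1) (N + 2))ᵀ) xs x =
      if (xs : ℕ) = x + 1 then lam x else if (xs : ℕ) = x then -mu x else 0 := by
  rw [mul_apply]
  refine (sum_bdGenerator_mul (by simp) (by simp)
    (fun ys => if ys ≤ (x : ℕ) then 1 else 0) xs).trans ?_
  have := x.isLt
  split_ifs <;> first | omega | simp_all

lemma bdGenerator_mul_siegmundKernel {N : ℕ} {lam mu : ℕ → ℝ} (hlamN : lam N = 0)
    (hmu0 : mu 0 = 0) :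
    bdGenerator N lam mu * siegmundKernel (N + 1) (N + 2) =
      (siegmundDual N lam mu * (siegmundKernel (N + 1) (N + 2))ᵀ)ᵀ := by
  ext x xs
  exact (bdGenerator_mul_siegmundKernel_apply hlamN hmu0 x xs).trans
    (siegmundDual_mul_siegmundKernel_transpose_apply x xs).symm

section

attribute [local instance] Matrix.linftyOpNormedRing Matrix.linftyOpNormedAlgebra

theorem Matrix.exp_mul_eq_mul_exp_of_mul_eq_mul {𝕂 m n : Type*} [RCLike 𝕂] [Fintype m]
    [DecidableEq m] [Fintype n] [DecidableEq n] {A : Matrix m m 𝕂} {B : Matrix n n 𝕂}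
    {H : Matrix m n 𝕂} (h : A * H = H * B) :
    NormedSpace.exp A * H = H * NormedSpace.exp B := by
  have hpow : ∀ k : ℕ, A ^ k * H = H * B ^ k := fun k => by
    induction k with
    | zero => simp
    | succ k ih => rw [pow_succ, pow_succ, Matrix.mul_assoc, h, ← Matrix.mul_assoc, ih,
        Matrix.mul_assoc]
  have hA := (NormedSpace.exp_series_hasSum_exp' (𝕂 := 𝕂) A).map
    (addMonoidHomMulRight H) (continuous_id.matrix_mul continuous_const)
  have hB := (NormedSpace.exp_series_hasSum_exp' (𝕂 := 𝕂) B).map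
    (addMonoidHomMulLeft H) (continuous_const.matrix_mul continuous_id)
  refine hA.unique (hB.congr_fun fun k => ?_)
  change ((k.factorial⁻¹ : 𝕂) • A ^ k) * H = H * ((k.factorial⁻¹ : 𝕂) • B ^ k)
  rw [Matrix.smul_mul, Matrix.mul_smul, hpow]

end

theorem siegmund_duality_birth_death_general (N : ℕ) (lam mu : ℕ → ℝ)
    (hlamN : lam N = 0) (hmu0 : mu 0 = 0) :
    let Q : Matrix (Fin (N + 1)) (Fin (N + 1)) ℝ := bdGenerator N lam mu
    let QS : Matrix (Fin (N + 2)) (Fin (N + 2)) ℝ :=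
      bdGenerator (N + 1) (fun x => if x ≤ N then mu x else 0)
        (fun x => if x = 0 then 0 else lam (x - 1))
    (∀ (x : Fin (N + 1)) (xs : Fin (N + 2)),
        ∑ y : Fin (N + 1), Q x y * (if xs.val ≤ y.val then (1 : ℝ) else 0)
          = ∑ ys : Fin (N + 2), QS xs ys * (if ys.val ≤ x.val then (1 : ℝ) else 0)) ∧
    (∀ t : ℝ, 0 ≤ t → ∀ (x : Fin (N + 1)) (xs : Fin (N + 2)),
        ∑ y : Fin (N + 1),
            (NormedSpace.exp (t • Q)) x y * (if xs.val ≤ y.val then (1 : ℝ) else 0)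
          = ∑ ys : Fin (N + 2),
              (NormedSpace.exp (t • QS)) xs ys * (if ys.val ≤ x.val then (1 : ℝ) else 0)) := by
  intro Q QS
  have hdual : Q * siegmundKernel (N + 1) (N + 2) = (QS * (siegmundKernel (N + 1) (N + 2))ᵀ)ᵀ :=
    bdGenerator_mul_siegmundKernel hlamN hmu0
  refine ⟨fun x xs => congr_fun₂ hdual x xs, fun t _ x xs => ?_⟩
  have hsemigroup : NormedSpace.exp (t • Q) * siegmundKernel (N + 1) (N + 2) =
      (NormedSpace.exp (t • QS) * (siegmundKernel (N + 1) (N + 2))ᵀ)ᵀ := by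
    rw [transpose_mul, transpose_transpose, ← exp_transpose, transpose_smul]
    refine exp_mul_eq_mul_exp_of_mul_eq_mul ?_
    rw [Matrix.smul_mul, Matrix.mul_smul, hdual, transpose_mul, transpose_transpose]
  exact congr_fun₂ hsemigroup x xs

/-- Siegmund duality for finite birth-death chains: with `X` a birth-death chain on
`{0,…,N}` (rates `λ_x, μ_x`, `λ_N = μ_0 = 0`) and `X^S` the chain on `{0,…,N+1}` with
birth rates `λ*_x = μ_x` (for `x ≤ N`) and death rates `μ*_x = λ_{x-1}` (for
`1 ≤ x ≤ N+1`), the generators satisfy `𝒜_X H(·,x*)(x) = 𝒜_{X^S} H(x,·)(x*)` for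
`H(x,x*) = 1_{x ≥ x*}`, and consequently the semigroups `exp(tQ)` satisfy
`P(X_t ≥ x* | X_0 = x) = P(x ≥ X^S_t | X^S_0 = x*)` for all `t ≥ 0`. -/
theorem siegmund_duality_birth_death (N : ℕ) (lam mu : ℕ → ℝ)
    (hlam : ∀ x, x < N → 0 ≤ lam x) (hmu : ∀ x, 0 < x → x ≤ N → 0 ≤ mu x)
    (hlamN : lam N = 0) (hmu0 : mu 0 = 0) :
    let Q : Matrix (Fin (N + 1)) (Fin (N + 1)) ℝ := bdGenerator N lam mu
    let QS : Matrix (Fin (N + 2)) (Fin (N + 2)) ℝ :=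
      bdGenerator (N + 1) (fun x => if x ≤ N then mu x else 0)
        (fun x => if x = 0 then 0 else lam (x - 1))
    (∀ (x : Fin (N + 1)) (xs : Fin (N + 2)),
        ∑ y : Fin (N + 1), Q x y * (if xs.val ≤ y.val then (1 : ℝ) else 0)
          = ∑ ys : Fin (N + 2), QS xs ys * (if ys.val ≤ x.val then (1 : ℝ) else 0)) ∧
    (∀ t : ℝ, 0 ≤ t → ∀ (x : Fin (N + 1)) (xs : Fin (N + 2)),
        ∑ y : Fin (N + 1),
            (NormedSpace.exp (t • Q)) x y * (if xs.val ≤ y.val then (1 : ℝ) else 0)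
          = ∑ ys : Fin (N + 2),
              (NormedSpace.exp (t • QS)) xs ys * (if ys.val ≤ x.val then (1 : ℝ) else 0)) :=
  siegmund_duality_birth_death_general N lam mu hlamN hmu0
end
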